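/- arXiv:quant-ph/0412071 — 2 statements merged into one kernel-verified Lean document; each statement's English description precedes it below -/
import Mathlib

section
/- Let G = (V, E) be a finite simple graph with nonempty vertex set and let d ≥ 1 be an integer. Then δ_loc(G) = d − 1 if and only if G has a d-locally evenly seen set and no (d−1)-locally evenly seen set. -/
open SimpleGraph

variable {V : Type*}

/-- Local complementation of `G` at the vertex `v`: adjacency among the
neighbors of `v` is complemented, i.e. the edge set is `E Δ K_v`. -/
def localComp (G : SimpleGraph V) (v : V) : SimpleGraph V where
  Adj u w := u ≠ w ∧ ¬ (G.Adj u w ↔ (G.Adj v u ∧ G.Adj v w))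
  symm := by
    constructor
    intro u w h
    refine ⟨h.1.symm, ?_⟩
    have h1 := G.adj_comm u w
    have h2 := h.2
    tauto
  loopless := by
    constructor
    intro u h
    exact h.1 rfl

/-- The minimal vertex degree `δ(G)` of a graph. -/
noncomputable def minDegree (G : SimpleGraph V) : ℕ :=
  sInf (Set.range fun v => (G.neighborSet v).ncard)

/-- The minimal degree under local complementation `δ_loc(G)`: the minimum of
`δ(G')` over all graphs `G'` obtainable from `G` by a finite sequence of
local complementations. -/
noncomputable def minDegreeLoc (G : SimpleGraph V) : ℕ :=
  sInf {n | ∃ l : List V, minDegree (l.foldl localComp G) = n}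

/-- `D` is an evenly seen set if every vertex outside `D` has an even number
of neighbors in `D`. -/
def EvenlySeen (G : SimpleGraph V) (D : Set V) : Prop :=
  ∀ u ∉ D, Even ((G.neighborSet u ∩ D).ncard)

/-- A nonempty set `K` is `d`-locally evenly seen if there is a set `D` with
`K ⊆ D ⊆ V` and `|D| = d` such that every vertex outside `D` has an even
number of neighbors in `K`. -/
def LocallyEvenlySeen (G : SimpleGraph V) (d : ℕ) (K : Set V) : Prop :=
  K.Nonempty ∧ ∃ D : Set V, K ⊆ D ∧ D.ncard = d ∧
    ∀ u ∉ D, Even ((G.neighborSet u ∩ K).ncard)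

/-!
Write `Odd_G(K)` for the set of vertices with an odd number of neighbours in `K`, and
`L_G(K) = K ∪ Odd_G(K)`; then `K` is `d`-locally evenly seen iff `K ≠ ∅` and `L_G(K)` lies in
a set of size `d`.
Over `𝔽₂`, local complementation at `v` changes the parity of `|N(u) ∩ K|` by
`[v ~ u] (|N(v) ∩ K| + [u ∈ K])`, so with `K' = K` if `v ∉ Odd_G(K)` and `K' = K ∆ {v}` otherwise,
`L_{G*v}(K') ⊆ L_G(K)`. Since `L_G({v}) = N[v]`, this transports a closed neighbourhood of minimum
degree in a locally equivalent graph back to `G`, so `min_{K ≠ ∅} |L_G(K)| ≤ δ_loc(G) + 1`.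
Conversely `δ_loc(G) + 1 ≤ |L_G(K)|` by induction on `|K|`: a vertex of `K` in `Odd_G(K)` can be
removed by complementing at it; if there is none but some `x ∈ K` has a neighbour `w ∉ Odd_G(K)`,
complementing at `w` puts `x` into `Odd(K)`; otherwise `N(x) ⊆ Odd_G(K)` for all `x ∈ K`, and then
`δ(G) < |L_G(K)|`.
-/

open scoped symmDiff

section LocalComplementation

variable (G : SimpleGraph V) (v : V)

@[simp]
lemma localComp_adj {u w : V} :
    (localComp G v).Adj u w ↔ u ≠ w ∧ ¬ (G.Adj u w ↔ G.Adj v u ∧ G.Adj v w) :=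
  Iff.rfl

@[simp]
lemma localComp_adj_self_left {u : V} : (localComp G v).Adj v u ↔ G.Adj v u := by
  by_cases h : G.Adj v u <;> simp [h, G.ne_of_adj]

@[simp]
lemma localComp_localComp : localComp (localComp G v) v = G := by
  ext u w
  have : G.Adj u w → u ≠ w := G.ne_of_adj
  rw [localComp_adj, localComp_adj_self_left, localComp_adj_self_left, localComp_adj]
  tauto

lemma neighborSet_localComp_of_not_adj {u : V} (h : ¬ G.Adj v u) :
    (localComp G v).neighborSet u = G.neighborSet u := by
  ext w
  simp only [mem_neighborSet, localComp_adj, h, false_and, iff_false, not_not]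
  exact ⟨fun hw => hw.2, fun hw => ⟨G.ne_of_adj hw, hw⟩⟩

lemma neighborSet_localComp_of_adj {u : V} (h : G.Adj v u) :
    (localComp G v).neighborSet u = G.neighborSet u ∆ G.neighborSet v ∆ {u} := by
  ext w
  simp only [mem_neighborSet, localComp_adj, Set.mem_symmDiff, Set.mem_singleton_iff, h, true_and]
  by_cases hwu : w = u
  · subst hwu
    simp [h]
  · have : u ≠ w := Ne.symm hwu
    tauto

end LocalComplementation

section MinDegree

variable (G : SimpleGraph V)

lemma minDegree_le (u : V) : minDegree G ≤ (G.neighborSet u).ncard :=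
  Nat.sInf_le ⟨u, rfl⟩

lemma exists_ncard_neighborSet_eq_minDegree [Nonempty V] :
    ∃ u, (G.neighborSet u).ncard = minDegree G :=
  Nat.sInf_mem (Set.range_nonempty _)

lemma minDegreeLoc_le_minDegree : minDegreeLoc G ≤ minDegree G :=
  Nat.sInf_le ⟨[], rfl⟩

lemma exists_minDegree_foldl_eq_minDegreeLoc :
    ∃ l : List V, minDegree (l.foldl localComp G) = minDegreeLoc G := by
  have hne : {n | ∃ l : List V, minDegree (l.foldl localComp G) = n}.Nonempty := ⟨_, [], rfl⟩
  exact Nat.sInf_mem hne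

lemma minDegreeLoc_le_localComp (v : V) : minDegreeLoc G ≤ minDegreeLoc (localComp G v) := by
  obtain ⟨l, hl⟩ := exists_minDegree_foldl_eq_minDegreeLoc (localComp G v)
  exact hl ▸ Nat.sInf_le ⟨v :: l, rfl⟩

lemma minDegreeLoc_localComp (v : V) : minDegreeLoc (localComp G v) = minDegreeLoc G :=
  le_antisymm (by simpa using minDegreeLoc_le_localComp (localComp G v) v)
    (minDegreeLoc_le_localComp G v)

end MinDegree

lemma Set.natCast_ncard_symmDiff {α : Type*} [Finite α] (s t : Set α) :
    ((s ∆ t).ncard : ZMod 2) = s.ncard + t.ncard := by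
  rw [Set.symmDiff_def, Set.ncard_union_eq disjoint_sdiff_sdiff,
    ← Set.ncard_inter_add_ncard_sdiff_eq_ncard s t, ← Set.ncard_inter_add_ncard_sdiff_eq_ncard t s,
    Set.inter_comm t s]
  push_cast
  linear_combination (-((s ∩ t).ncard : ZMod 2)) * CharTwo.two_eq_zero (R := ZMod 2)

section Parity

variable (G : SimpleGraph V)

noncomputable def nbrParity (K : Set V) (u : V) : ZMod 2 := (G.neighborSet u ∩ K).ncard

def oddNbhd (K : Set V) : Set V := {u | Odd (G.neighborSet u ∩ K).ncard}

variable {G}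

lemma mem_oddNbhd {K : Set V} {u : V} : u ∈ oddNbhd G K ↔ nbrParity G K u = 1 :=
  ZMod.natCast_eq_one_iff_odd.symm

lemma notMem_oddNbhd {K : Set V} {u : V} : u ∉ oddNbhd G K ↔ nbrParity G K u = 0 := by
  rw [nbrParity, ZMod.natCast_eq_zero_iff_even, ← Nat.not_odd_iff_even]
  rfl

lemma nbrParity_symmDiff [Finite V] (K L : Set V) (u : V) :
    nbrParity G (K ∆ L) u = nbrParity G K u + nbrParity G L u := by
  rw [nbrParity, Set.inter_symmDiff_distrib_left, Set.natCast_ncard_symmDiff]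
  rfl

lemma nbrParity_singleton_of_adj {x u : V} (h : G.Adj u x) : nbrParity G {x} u = 1 := by
  rw [nbrParity, Set.inter_singleton_of_mem (show x ∈ G.neighborSet u from h),
    Set.ncard_singleton, Nat.cast_one]

lemma nbrParity_singleton_of_not_adj {x u : V} (h : ¬ G.Adj u x) : nbrParity G {x} u = 0 := by
  rw [nbrParity, Set.inter_singleton_of_notMem (show x ∉ G.neighborSet u from h),
    Set.ncard_empty, Nat.cast_zero]

lemma oddNbhd_singleton (x : V) : oddNbhd G {x} = G.neighborSet x := by
  ext u
  rw [mem_oddNbhd, mem_neighborSet, G.adj_comm]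
  by_cases h : G.Adj u x
  · simp [h, nbrParity_singleton_of_adj h]
  · simp [h, nbrParity_singleton_of_not_adj h]

lemma nbrParity_localComp_of_not_adj {v u : V} (K : Set V) (h : ¬ G.Adj v u) :
    nbrParity (localComp G v) K u = nbrParity G K u := by
  rw [nbrParity, nbrParity, neighborSet_localComp_of_not_adj G v h]

lemma nbrParity_localComp_of_adj [Finite V] {v u : V} (K : Set V) (h : G.Adj v u) :
    nbrParity (localComp G v) K u = nbrParity G K u + nbrParity G K v + ({u} ∩ K).ncard := by
  rw [nbrParity, neighborSet_localComp_of_adj G v h, Set.inter_symmDiff_distrib_right,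
    Set.inter_symmDiff_distrib_right, Set.natCast_ncard_symmDiff, Set.natCast_ncard_symmDiff]
  rfl

end Parity

section LocalSet

variable (G : SimpleGraph V)

def localSet (K : Set V) : Set V := K ∪ oddNbhd G K

variable {G}

lemma localSet_singleton (v : V) : localSet G {v} = insert v (G.neighborSet v) := by
  rw [localSet, oddNbhd_singleton, Set.singleton_union]

lemma locallyEvenlySeen_iff {d : ℕ} {K : Set V} :
    LocallyEvenlySeen G d K ↔ K.Nonempty ∧ ∃ D, localSet G K ⊆ D ∧ D.ncard = d := by
  have heven (D : Set V) :
      (∀ u ∉ D, Even (G.neighborSet u ∩ K).ncard) ↔ oddNbhd G K ⊆ D :=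
    forall_congr' fun u => by rw [← Nat.not_odd_iff_even, not_imp_not]; rfl
  simp only [LocallyEvenlySeen, localSet, Set.union_subset_iff, heven, and_assoc]
  exact and_congr_right' (exists_congr fun _ => and_congr_right' and_comm)

lemma localSet_subset_localSet {G' : SimpleGraph V} {K K' : Set V} (hK' : K' ⊆ localSet G K)
    (hparity : ∀ u ∉ K, nbrParity G' K' u = nbrParity G K u) :
    localSet G' K' ⊆ localSet G K := by
  rintro u (hu | hu)
  · exact hK' hu
  · by_cases huK : u ∈ K
    · exact Or.inl huK
    · rw [mem_oddNbhd, hparity u huK] at hu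
      exact Or.inr (mem_oddNbhd.mpr hu)

lemma nonempty_symmDiff_singleton {K : Set V} {v : V} (hv : v ∈ oddNbhd G K) :
    (K ∆ {v}).Nonempty := by
  rw [Set.symmDiff_nonempty]
  rintro rfl
  rw [oddNbhd_singleton] at hv
  exact G.irrefl hv

variable [Finite V]

lemma localSet_localComp_subset {K : Set V} {v : V} (hv : v ∉ oddNbhd G K) :
    localSet (localComp G v) K ⊆ localSet G K := by
  refine localSet_subset_localSet Set.subset_union_left fun u hu => ?_
  by_cases h : G.Adj v u
  · rw [nbrParity_localComp_of_adj K h, notMem_oddNbhd.mp hv, Set.singleton_inter_of_notMem hu,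
      Set.ncard_empty, Nat.cast_zero, add_zero, add_zero]
  · exact nbrParity_localComp_of_not_adj K h

lemma localSet_localComp_symmDiff_subset {K : Set V} {v : V} (hv : v ∈ oddNbhd G K) :
    localSet (localComp G v) (K ∆ {v}) ⊆ localSet G K := by
  refine localSet_subset_localSet ?_ fun u hu => ?_
  · exact Set.symmDiff_subset_union.trans
      (Set.union_subset_union_right K (Set.singleton_subset_iff.mpr hv))
  rw [nbrParity_symmDiff]
  by_cases h : G.Adj v u
  · rw [nbrParity_localComp_of_adj K h, mem_oddNbhd.mp hv, Set.singleton_inter_of_notMem hu,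
      nbrParity_singleton_of_adj ((localComp_adj_self_left G v).mpr h).symm, Set.ncard_empty,
      Nat.cast_zero, add_zero, add_assoc, CharTwo.add_self_eq_zero, add_zero]
  · have h' : ¬ (localComp G v).Adj u v := by rwa [adj_comm, localComp_adj_self_left]
    rw [nbrParity_localComp_of_not_adj K h, nbrParity_singleton_of_not_adj h', add_zero]

lemma exists_localSet_localComp_subset (v : V) {K : Set V} (hK : K.Nonempty) :
    ∃ K', K'.Nonempty ∧ localSet (localComp G v) K' ⊆ localSet G K := by
  by_cases hv : v ∈ oddNbhd G K
  · exact ⟨_, nonempty_symmDiff_singleton hv, localSet_localComp_symmDiff_subset hv⟩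
  · exact ⟨K, hK, localSet_localComp_subset hv⟩

lemma exists_localSet_subset_localSet_foldl (l : List V) {K : Set V} (hK : K.Nonempty) :
    ∃ K', K'.Nonempty ∧ localSet G K' ⊆ localSet (l.foldl localComp G) K := by
  induction l generalizing G with
  | nil => exact ⟨K, hK, subset_rfl⟩
  | cons v l ih =>
    obtain ⟨K₁, hK₁, h₁⟩ := ih (G := localComp G v)
    obtain ⟨K₂, hK₂, h₂⟩ := exists_localSet_localComp_subset (G := localComp G v) v hK₁
    rw [localComp_localComp] at h₂
    exact ⟨K₂, hK₂, h₂.trans h₁⟩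

variable (G) in
lemma exists_ncard_localSet_le_minDegreeLoc_add_one [Nonempty V] :
    ∃ K : Set V, K.Nonempty ∧ (localSet G K).ncard ≤ minDegreeLoc G + 1 := by
  obtain ⟨l, hl⟩ := exists_minDegree_foldl_eq_minDegreeLoc G
  obtain ⟨v, hv⟩ := exists_ncard_neighborSet_eq_minDegree (l.foldl localComp G)
  obtain ⟨K, hK, hsub⟩ :=
    exists_localSet_subset_localSet_foldl (G := G) l (Set.singleton_nonempty v)
  refine ⟨K, hK, ?_⟩
  calc (localSet G K).ncard ≤ (localSet (l.foldl localComp G) {v}).ncard :=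
        Set.ncard_le_ncard hsub
    _ ≤ ((l.foldl localComp G).neighborSet v).ncard + 1 := by
        rw [localSet_singleton]
        exact Set.ncard_insert_le _ _
    _ = minDegreeLoc G + 1 := by rw [hv, hl]

lemma mem_oddNbhd_localComp {K : Set V} {x w : V} (hx : x ∈ K) (hxo : x ∉ oddNbhd G K)
    (hwo : w ∉ oddNbhd G K) (hwx : G.Adj w x) : x ∈ oddNbhd (localComp G w) K := by
  rw [mem_oddNbhd, nbrParity_localComp_of_adj K hwx, notMem_oddNbhd.mp hxo, notMem_oddNbhd.mp hwo,
    Set.singleton_inter_of_mem hx, Set.ncard_singleton, Nat.cast_one, zero_add, zero_add]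

lemma ncard_neighborSet_lt_ncard_localSet {K : Set V} {x : V} (hx : x ∈ K)
    (h : G.neighborSet x ⊆ oddNbhd G K) : (G.neighborSet x).ncard < (localSet G K).ncard := by
  have hsub : G.neighborSet x ⊆ localSet G K := h.trans Set.subset_union_right
  exact Set.ncard_lt_ncard ((Set.ssubset_iff_of_subset hsub).mpr ⟨x, Or.inl hx, G.irrefl⟩)

end LocalSet

section Main

variable [Finite V] {G : SimpleGraph V}

lemma minDegreeLoc_add_one_le_ncard_localSet {K : Set V} (hK : K.Nonempty) :
    minDegreeLoc G + 1 ≤ (localSet G K).ncard := by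
  induction hn : K.ncard using Nat.strong_induction_on generalizing G K with
  | _ n ih =>
    have drop_odd_vertex : ∀ G' : SimpleGraph V, minDegreeLoc G' = minDegreeLoc G →
        localSet G' K ⊆ localSet G K → ∀ x ∈ K, x ∈ oddNbhd G' K →
        minDegreeLoc G + 1 ≤ (localSet G K).ncard := by
      intro G' hG' hsub x hxK hx
      have hlt : (K ∆ {x}).ncard < n := by
        rw [symmDiff_of_ge (Set.singleton_subset_iff.mpr hxK), ← hn]
        exact Set.ncard_sdiff_singleton_lt_of_mem hxK
      calc minDegreeLoc G + 1 = minDegreeLoc (localComp G' x) + 1 := by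
            rw [minDegreeLoc_localComp, hG']
        _ ≤ (localSet (localComp G' x) (K ∆ {x})).ncard :=
            ih _ hlt (nonempty_symmDiff_singleton hx) rfl
        _ ≤ (localSet G K).ncard :=
            Set.ncard_le_ncard ((localSet_localComp_symmDiff_subset hx).trans hsub)
    by_cases hodd : ∃ x ∈ K, x ∈ oddNbhd G K
    · obtain ⟨x, hxK, hx⟩ := hodd
      exact drop_odd_vertex G rfl subset_rfl x hxK hx
    push Not at hodd
    by_cases heven : ∃ x ∈ K, ∃ w, G.Adj w x ∧ w ∉ oddNbhd G K
    · obtain ⟨x, hxK, w, hwx, hw⟩ := heven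
      exact drop_odd_vertex _ (minDegreeLoc_localComp G w) (localSet_localComp_subset hw) x hxK
        (mem_oddNbhd_localComp hxK (hodd x hxK) hw hwx)
    push Not at heven
    obtain ⟨x, hxK⟩ := hK
    have hdeg :=
      ncard_neighborSet_lt_ncard_localSet hxK fun w hw => heven x hxK w (G.adj_symm hw)
    have := minDegree_le G x
    have := minDegreeLoc_le_minDegree G
    omega

lemma exists_locallyEvenlySeen_iff [Nonempty V] {d : ℕ} :
    (∃ K, LocallyEvenlySeen G d K) ↔ minDegreeLoc G + 1 ≤ d ∧ d ≤ Nat.card V := by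
  simp only [locallyEvenlySeen_iff]
  constructor
  · rintro ⟨K, hK, D, hKD, rfl⟩
    exact ⟨(minDegreeLoc_add_one_le_ncard_localSet hK).trans (Set.ncard_le_ncard hKD),
      Set.ncard_le_card D⟩
  · rintro ⟨hmin, hcard⟩
    obtain ⟨K, hK, hKle⟩ := exists_ncard_localSet_le_minDegreeLoc_add_one G
    obtain ⟨D, hKD, -, hD⟩ := Set.exists_subsuperset_card_eq (Set.subset_univ (localSet G K))
      (hKle.trans hmin) (by rwa [Set.ncard_univ])
    exact ⟨K, hK, D, hKD, hD⟩

end Main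

/-- `δ_loc(G) = d - 1` iff `G` has a `d`-locally evenly seen set
and no `(d-1)`-locally evenly seen set (for `d ≥ 1`, nonempty vertex set). -/
theorem statement_6 [Fintype V] [Nonempty V] (G : SimpleGraph V) (d : ℕ) (hd : 1 ≤ d) :
    minDegreeLoc G = d - 1 ↔
      ((∃ K : Set V, LocallyEvenlySeen G d K) ∧
        ¬ ∃ K : Set V, LocallyEvenlySeen G (d - 1) K) := by
  have hcard : minDegreeLoc G + 1 ≤ Nat.card V :=
    (minDegreeLoc_add_one_le_ncard_localSet (Set.singleton_nonempty (Classical.arbitrary V))).trans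
      (Set.ncard_le_card _)
  rw [exists_locallyEvenlySeen_iff, exists_locallyEvenlySeen_iff]
  omega
end

section
/- Let G = (V, E) be a finite simple graph and let K ⊆ D ⊆ V be such that every vertex u ∈ V \ D has an even number of neighbors in K. Let v ∈ K be such that |N_G(v) ∩ K| is odd, and set G' = λ_v(G). Then every vertex u ∈ V \ D has an even number of neighbors in K \ {v} in the graph G'. -/
open SimpleGraph
open scoped symmDiff

variable {V : Type*}

theorem Set.ncard_symmDiff_add_two_mul_ncard_inter {α : Type*} (s t : Set α)
    (hs : s.Finite := by toFinite_tac) (ht : t.Finite := by toFinite_tac) :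
    (s ∆ t).ncard + 2 * (s ∩ t).ncard = s.ncard + t.ncard := by
  have hdiff := Set.ncard_sdiff_add_ncard_of_subset
    (Set.inter_subset_left.trans Set.subset_union_left : s ∩ t ⊆ s ∪ t) (hs.union ht)
  have hunion := Set.ncard_union_add_ncard_inter s t hs ht
  rw [symmDiff_eq_sup_sdiff_inf]
  change ((s ∪ t) \ (s ∩ t)).ncard + _ = _
  omega

theorem Set.even_ncard_symmDiff_iff {α : Type*} (s t : Set α)
    (hs : s.Finite := by toFinite_tac) (ht : t.Finite := by toFinite_tac) :
    Even (s ∆ t).ncard ↔ (Even s.ncard ↔ Even t.ncard) := by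
  rw [← Nat.even_add, ← Set.ncard_symmDiff_add_two_mul_ncard_inter s t hs ht,
    Nat.even_add, iff_true_intro (even_two_mul _), iff_true]

/-!
Away from `v`, local complementation at `v` only changes the neighbourhoods of neighbours of `v`.
For a neighbour `u ∉ K` of `v`, the new neighbours of `u` in `K \ {v}` are
`((N(u) ∩ K) ∆ (N(v) ∩ K)) \ {v}`: the symmetric difference has size of parity
`|N(u) ∩ K| + |N(v) ∩ K|`, which is odd, and it contains `v` (as `u ~ v` and `v ≁ v`),
so removing `v` leaves an even number.
-/

section localComp

variable (G : SimpleGraph V) {u v : V}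

theorem localComp_neighborSet_of_adj (h : G.Adj v u) :
    (localComp G v).neighborSet u = (G.neighborSet u ∆ G.neighborSet v) \ {u} := by
  ext w
  simp only [localComp, mem_neighborSet, Set.mem_sdiff, Set.mem_symmDiff,
    Set.mem_singleton_iff, h, true_and]
  have : u ≠ w ↔ ¬w = u := ne_comm
  tauto

theorem localComp_neighborSet_of_not_adj (h : ¬ G.Adj v u) :
    (localComp G v).neighborSet u = G.neighborSet u := by
  ext w
  simp only [localComp, mem_neighborSet, h, false_and, iff_false, not_not]
  exact ⟨And.right, fun huw => ⟨G.ne_of_adj huw, huw⟩⟩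

end localComp

/-- If every vertex outside `D` sees `K ⊆ D` evenly and
`v ∈ K` has an odd number of neighbors in `K`, then after local
complementation at `v`, every vertex outside `D` sees `K \ {v}` evenly. -/
theorem statement_13 [Fintype V] (G : SimpleGraph V) (K D : Set V) (hKD : K ⊆ D)
    (hseen : ∀ u ∉ D, Even ((G.neighborSet u ∩ K).ncard))
    (v : V) (hv : v ∈ K) (hodd : Odd ((G.neighborSet v ∩ K).ncard)) :
    ∀ u ∉ D, Even (((localComp G v).neighborSet u ∩ (K \ {v})).ncard) := by
  intro u hu
  have huK : u ∉ K := fun h => hu (hKD h)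
  by_cases hvu : G.Adj v u
  · set S := (G.neighborSet u ∩ K) ∆ (G.neighborSet v ∩ K)
    have hS : (localComp G v).neighborSet u ∩ (K \ {v}) = S \ {v} := by
      rw [localComp_neighborSet_of_adj G hvu]
      ext w
      have hwu : w ∈ K → w ≠ u := fun hw h => huK (h ▸ hw)
      simp only [S, Set.mem_inter_iff, Set.mem_sdiff, Set.mem_singleton_iff, Set.mem_symmDiff,
        mem_neighborSet]
      tauto
    have hvS : v ∈ S := Or.inl ⟨⟨hvu.symm, hv⟩, fun h => G.loopless.irrefl v h.1⟩
    have hSodd : Odd S.ncard := by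
      rw [← Nat.not_even_iff_odd] at hodd ⊢
      rw [Set.even_ncard_symmDiff_iff]
      tauto
    rw [hS, Set.ncard_sdiff_singleton_of_mem hvS]
    exact Nat.Odd.sub_odd hSodd odd_one
  · rw [localComp_neighborSet_of_not_adj G hvu, ← Set.inter_sdiff_assoc,
      Set.sdiff_singleton_eq_self (fun h => hvu h.1.symm)]
    exact hseen u hu
end
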